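/- Let ρ be an ordinal, a ∈ X, m : ℕ → ℕ strictly increasing, and y : ℕ → X a sequence with d (y n) a = ω^ρ · (m n) for all n ∈ ℕ. Then there exists a sequence z : ℕ → X such that for every μ ∈ ℕ, {n : d (y n) a ♯ ω^ρ · μ ≤ d (z n) a} ∈ F. (This is the 'farther galaxy' construction in the proof of Theorem 5.1: the ρ-galaxy of [z] is further away from the principal ρ-galaxy than the ρ-galaxy of [y].) -/

import Mathlib

/-!
Take `z n = y (2 n)`. As `m` is strictly increasing, `m (2 n) ≥ m n + μ` once `n ≥ μ`, a cofinite
condition. It remains to see `ω ^ ρ * p ♯ ω ^ ρ * q ≤ ω ^ ρ * (p + q)` for natural `p, q`. Every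
power `ω ^ ρ` is closed under `♯` (inductively in `ρ`), and for any `♯`-closed `b` one shows
`b * α ♯ b * β ≤ b * (α ♯ β)` by writing ordinals below `b * α` as `b * j + r` with `r < b`.
-/

open Filter Ordinal
open scoped Ordinal

universe u

/-- The natural (Hessenberg) sum of ordinals, as `Ordinal.nadd` was defined in the older Mathlib
(removed since). -/
noncomputable def Ordinal.nadd : Ordinal.{u} → Ordinal.{u} → Ordinal.{u}
  | a, b =>
    max (⨆ x : Set.Iio a, Order.succ (Ordinal.nadd x.1 b))
      (⨆ x : Set.Iio b, Order.succ (Ordinal.nadd a x.1))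
termination_by a b => (a, b)
decreasing_by
  · exact Prod.Lex.left _ _ x.2
  · exact Prod.Lex.right _ x.2

infixl:65 " ♯ " => Ordinal.nadd

/-- Sequences `x, y : ℕ → X` are `ρ`-limitedly distant if there exists `μ ∈ ℕ` with
`{n : d (x n) (y n) ≤ ω^ρ · μ} ∈ F`. -/
def LimitedlyDistant {X : Type*} (d : X → X → Ordinal) (F : Ultrafilter ℕ)
    (ρ : Ordinal) (x y : ℕ → X) : Prop :=
  ∃ μ : ℕ, {n : ℕ | d (x n) (y n) ≤ ω ^ ρ * μ} ∈ F

namespace Ordinal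

theorem nadd_def (a b : Ordinal.{u}) : a ♯ b = max (⨆ x : Set.Iio a, Order.succ (x.1 ♯ b))
    (⨆ x : Set.Iio b, Order.succ (a ♯ x.1)) := by
  rw [Ordinal.nadd]

theorem lt_nadd_left {a' a : Ordinal.{u}} (h : a' < a) (b : Ordinal.{u}) : a' ♯ b < a ♯ b := by
  rw [nadd_def a b]
  exact (Order.lt_succ _).trans_le (le_max_of_le_left
    (le_ciSup (f := fun x : Set.Iio a => Order.succ (x.1 ♯ b)) bddAbove_of_small ⟨a', h⟩))

theorem lt_nadd_right {b' b : Ordinal.{u}} (h : b' < b) (a : Ordinal.{u}) : a ♯ b' < a ♯ b := by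
  rw [nadd_def a b]
  exact (Order.lt_succ _).trans_le (le_max_of_le_right
    (le_ciSup (f := fun x : Set.Iio b => Order.succ (a ♯ x.1)) bddAbove_of_small ⟨b', h⟩))

theorem nadd_le_of {a b c : Ordinal.{u}} (h₁ : ∀ a' < a, a' ♯ b < c) (h₂ : ∀ b' < b, a ♯ b' < c) :
    a ♯ b ≤ c := by
  rw [nadd_def]
  exact max_le (ciSup_le' fun x => Order.succ_le_of_lt (h₁ x.1 x.2))
    (ciSup_le' fun x => Order.succ_le_of_lt (h₂ x.1 x.2))

theorem lt_nadd_iff {a b c : Ordinal.{u}} :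
    c < a ♯ b ↔ (∃ a' < a, c ≤ a' ♯ b) ∨ ∃ b' < b, c ≤ a ♯ b' := by
  constructor
  · intro h
    by_contra! hn
    exact (nadd_le_of hn.1 hn.2).not_gt h
  · rintro (⟨a', ha', hc⟩ | ⟨b', hb', hc⟩)
    · exact hc.trans_lt (lt_nadd_left ha' b)
    · exact hc.trans_lt (lt_nadd_right hb' a)

theorem nadd_le_nadd_right {a b : Ordinal.{u}} (h : a ≤ b) (c : Ordinal.{u}) : a ♯ c ≤ b ♯ c :=
  h.eq_or_lt.elim (fun e => e ▸ le_rfl) fun h => (lt_nadd_left h c).le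

theorem nadd_le_nadd_left {b c : Ordinal.{u}} (h : b ≤ c) (a : Ordinal.{u}) : a ♯ b ≤ a ♯ c :=
  h.eq_or_lt.elim (fun e => e ▸ le_rfl) fun h => (lt_nadd_right h a).le

theorem nadd_lt_nadd {a b c d : Ordinal.{u}} (h₁ : a < b) (h₂ : c < d) : a ♯ c < b ♯ d :=
  (lt_nadd_left h₁ c).trans_le (nadd_le_nadd_left h₂.le b)

@[simp]
theorem nadd_zero (a : Ordinal.{u}) : a ♯ 0 = a := by
  induction a using WellFoundedLT.induction with
  | _ a IH =>
  refine le_antisymm (nadd_le_of (fun a' h => (IH a' h).trans_lt h)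
    fun b' h => absurd h not_lt_zero) (le_of_forall_lt fun a' h => ?_)
  simpa only [IH a' h] using lt_nadd_left h 0

theorem add_le_nadd (a b : Ordinal.{u}) : a + b ≤ a ♯ b := by
  induction b using WellFoundedLT.induction with
  | _ b IH =>
  rcases eq_or_ne b 0 with rfl | hb
  · simp
  · exact (add_le_iff hb).2 fun d hd => (IH d hd).trans_lt (lt_nadd_right hd a)

theorem nadd_comm (a b : Ordinal.{u}) : a ♯ b = b ♯ a := by
  induction a using WellFoundedLT.induction generalizing b with
  | _ a IHa =>
  induction b using WellFoundedLT.induction with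
  | _ b IHb =>
  refine le_antisymm (nadd_le_of (fun a' h => ?_) (fun b' h => ?_))
    (nadd_le_of (fun b' h => ?_) (fun a' h => ?_))
  · rw [IHa a' h b]; exact lt_nadd_right h b
  · rw [IHb b' h]; exact lt_nadd_left h a
  · rw [← IHb b' h]; exact lt_nadd_right h a
  · rw [← IHa a' h b]; exact lt_nadd_left h b

theorem nadd_assoc (a b c : Ordinal.{u}) : a ♯ b ♯ c = a ♯ (b ♯ c) := by
  induction a using WellFoundedLT.induction generalizing b c with
  | _ a IHa =>
  induction b using WellFoundedLT.induction generalizing c with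
  | _ b IHb =>
  induction c using WellFoundedLT.induction with
  | _ c IHc =>
  apply le_antisymm
  · refine nadd_le_of (fun d hd => ?_) fun c' hc' => ?_
    · rcases lt_nadd_iff.1 hd with ⟨a', ha', hda⟩ | ⟨b', hb', hdb⟩
      · calc d ♯ c ≤ a' ♯ b ♯ c := nadd_le_nadd_right hda c
          _ = a' ♯ (b ♯ c) := IHa a' ha' b c
          _ < a ♯ (b ♯ c) := lt_nadd_left ha' _
      · calc d ♯ c ≤ a ♯ b' ♯ c := nadd_le_nadd_right hdb c
          _ = a ♯ (b' ♯ c) := IHb b' hb' c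
          _ < a ♯ (b ♯ c) := lt_nadd_right (lt_nadd_left hb' c) a
    · rw [IHc c' hc']
      exact lt_nadd_right (lt_nadd_right hc' b) a
  · refine nadd_le_of (fun a' ha' => ?_) fun d hd => ?_
    · rw [← IHa a' ha' b c]
      exact lt_nadd_left (lt_nadd_left ha' b) c
    · rcases lt_nadd_iff.1 hd with ⟨b', hb', hdb⟩ | ⟨c', hc', hdc⟩
      · calc a ♯ d ≤ a ♯ (b' ♯ c) := nadd_le_nadd_left hdb a
          _ = a ♯ b' ♯ c := (IHb b' hb' c).symm
          _ < a ♯ b ♯ c := lt_nadd_left (lt_nadd_right hb' a) c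
      · calc a ♯ d ≤ a ♯ (b ♯ c') := nadd_le_nadd_left hdc a
          _ = a ♯ b ♯ c' := (IHc c' hc').symm
          _ < a ♯ b ♯ c := lt_nadd_right hc' _

theorem nadd_right_comm (a b c : Ordinal.{u}) : a ♯ b ♯ c = a ♯ c ♯ b := by
  rw [nadd_assoc, nadd_comm b c, ← nadd_assoc]

theorem nadd_one (a : Ordinal.{u}) : a ♯ 1 = a + 1 := by
  induction a using WellFoundedLT.induction with
  | _ a IH =>
  refine le_antisymm (nadd_le_of (fun a' h => ?_) fun b' h => ?_) (add_le_nadd a 1)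
  · rw [IH a' h, ← Order.succ_eq_add_one, ← Order.succ_eq_add_one]
    exact Order.succ_lt_succ h
  · rw [Order.lt_one_iff.1 h, nadd_zero]
    exact lt_add_one a

theorem nadd_natCast (a : Ordinal.{u}) (n : ℕ) : a ♯ n = a + n := by
  induction n with
  | zero => simp
  | succ n IH =>
    calc a ♯ (n + 1 : ℕ) = a ♯ (n ♯ 1) := by rw [nadd_one, Nat.cast_succ]
      _ = a ♯ n ♯ 1 := (nadd_assoc _ _ _).symm
      _ = a + (n + 1 : ℕ) := by rw [IH, nadd_one, Nat.cast_succ, add_assoc]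

theorem exists_le_mul_nadd_of_lt_mul {a b α : Ordinal.{u}} (h : a < b * α) :
    ∃ j < α, ∃ r < b, a ≤ b * j ♯ r := by
  obtain ⟨j, hj, r, hr, rfl⟩ := lt_mul_iff.1 h
  exact ⟨j, hj, r, hr, add_le_nadd _ _⟩

theorem IsPrincipal.mul_nadd_le_mul_add {b : Ordinal.{u}} (hb : IsPrincipal (· ♯ ·) b)
    (α : Ordinal.{u}) {c : Ordinal.{u}} (hc : c < b) : b * α ♯ c ≤ b * α + c := by
  induction α using WellFoundedLT.induction generalizing c with
  | _ α IHα =>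
  induction c using WellFoundedLT.induction with
  | _ c IHc =>
  refine nadd_le_of (fun a ha => ?_) fun c' hc' =>
    (IHc c' hc' (hc'.trans hc)).trans_lt (add_lt_add_right hc' _)
  obtain ⟨j, hj, r, hr, hjr⟩ := exists_le_mul_nadd_of_lt_mul ha
  calc a ♯ c ≤ b * j ♯ r ♯ c := nadd_le_nadd_right hjr c
    _ = b * j ♯ (r ♯ c) := nadd_assoc _ _ _
    _ ≤ b * j + (r ♯ c) := IHα j hj (hb hr hc)
    _ < b * j + b := add_lt_add_right (hb hr hc) _
    _ = b * Order.succ j := (mul_succ _ _).symm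
    _ ≤ b * α := by gcongr; exact Order.succ_le_of_lt hj
    _ ≤ b * α + c := le_self_add

theorem IsPrincipal.nadd_mul_lt_mul_nadd {b : Ordinal.{u}} (hb : IsPrincipal (· ♯ ·) b)
    {a α β : Ordinal.{u}} (ha : a < b * α)
    (IH : ∀ j < α, b * j ♯ b * β ≤ b * (j ♯ β)) : a ♯ b * β < b * (α ♯ β) := by
  obtain ⟨j, hj, r, hr, hjr⟩ := exists_le_mul_nadd_of_lt_mul ha
  calc a ♯ b * β ≤ b * j ♯ r ♯ b * β := nadd_le_nadd_right hjr _
    _ = b * j ♯ b * β ♯ r := nadd_right_comm _ _ _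
    _ ≤ b * (j ♯ β) ♯ r := nadd_le_nadd_right (IH j hj) r
    _ ≤ b * (j ♯ β) + r := hb.mul_nadd_le_mul_add _ hr
    _ < b * (j ♯ β) + b := add_lt_add_right hr _
    _ = b * Order.succ (j ♯ β) := (mul_succ _ _).symm
    _ ≤ b * (α ♯ β) := by gcongr; exact Order.succ_le_of_lt (lt_nadd_left hj β)

theorem IsPrincipal.mul_nadd_mul_le {b : Ordinal.{u}} (hb : IsPrincipal (· ♯ ·) b)
    (α β : Ordinal.{u}) : b * α ♯ b * β ≤ b * (α ♯ β) := by
  induction α using WellFoundedLT.induction generalizing β with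
  | _ α IHα =>
  induction β using WellFoundedLT.induction with
  | _ β IHβ =>
  refine nadd_le_of (fun a ha => hb.nadd_mul_lt_mul_nadd ha fun j hj => IHα j hj β)
    fun a ha => ?_
  rw [nadd_comm, nadd_comm α]
  refine hb.nadd_mul_lt_mul_nadd ha fun j hj => ?_
  rw [nadd_comm, nadd_comm j]
  exact IHβ j hj

theorem isPrincipal_nadd_omega0_opow (ρ : Ordinal.{u}) : IsPrincipal (· ♯ ·) (ω ^ ρ) := by
  induction ρ using WellFoundedLT.induction with
  | _ ρ IH =>
  intro a b ha hb
  rcases eq_or_ne ρ 0 with rfl | hρ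
  · rw [opow_zero, Order.lt_one_iff] at ha hb ⊢
    rw [ha, hb]
    exact nadd_zero 0
  obtain ⟨e, he, n, hn⟩ := (lt_omega0_opow hρ).1 (max_lt ha hb)
  calc a ♯ b < ω ^ e * n ♯ ω ^ e * n :=
        nadd_lt_nadd ((le_max_left a b).trans_lt hn) ((le_max_right a b).trans_lt hn)
    _ ≤ ω ^ e * (n ♯ n) := (IH e he).mul_nadd_mul_le _ _
    _ = ω ^ e * (n + n : ℕ) := by rw [nadd_natCast, Nat.cast_add]
    _ < ω ^ ρ := opow_mul_lt_opow (natCast_lt_omega0 _) he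

theorem omega0_opow_mul_natCast_nadd_le (ρ : Ordinal.{u}) (p q : ℕ) :
    ω ^ ρ * p ♯ ω ^ ρ * q ≤ ω ^ ρ * (p + q : ℕ) := by
  rw [Nat.cast_add, ← nadd_natCast]
  exact (isPrincipal_nadd_omega0_opow ρ).mul_nadd_mul_le _ _

end Ordinal

theorem exists_farther_galaxy_general
    (X : Type*) (d : X → X → Ordinal)
    (F : Ultrafilter ℕ) (hF : ∀ s : Set ℕ, sᶜ.Finite → s ∈ F)
    (ρ : Ordinal) (a : X) (m : ℕ → ℕ) (hm : StrictMono m)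
    (y : ℕ → X) (hy : ∀ n : ℕ, d (y n) a = ω ^ ρ * (m n)) :
    ∃ z : ℕ → X,
      ∀ μ : ℕ, {n : ℕ | d (y n) a ♯ ω ^ ρ * μ ≤ d (z n) a} ∈ F := by
  refine ⟨fun n => y (2 * n), fun μ =>
    mem_of_superset (hF {n | μ ≤ n} ?_) fun n (hn : μ ≤ n) => ?_⟩
  · simpa only [Set.compl_ofPred, not_le] using Set.finite_lt_nat μ
  · have hmμ : μ + m n ≤ m (2 * n) := (hm.add_le_nat μ n).trans (hm.monotone (by omega))
    show d (y n) a ♯ ω ^ ρ * μ ≤ d (y (2 * n)) a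
    rw [hy, hy]
    calc ω ^ ρ * m n ♯ ω ^ ρ * μ ≤ ω ^ ρ * (m n + μ : ℕ) := omega0_opow_mul_natCast_nadd_le ρ _ _
      _ ≤ ω ^ ρ * m (2 * n) := by gcongr; omega

theorem exists_farther_galaxy
    (X : Type*) (d : X → X → Ordinal)
    (hd0 : ∀ a b : X, d a b = 0 ↔ a = b)
    (hdsymm : ∀ a b : X, d a b = d b a)
    (hdtri : ∀ a b c : X, d a c ≤ d a b ♯ d b c)
    (F : Ultrafilter ℕ) (hF : ∀ s : Set ℕ, sᶜ.Finite → s ∈ F)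
    (ρ : Ordinal) (a : X) (m : ℕ → ℕ) (hm : StrictMono m)
    (y : ℕ → X) (hy : ∀ n : ℕ, d (y n) a = ω ^ ρ * (m n)) :
    ∃ z : ℕ → X,
      ∀ μ : ℕ, {n : ℕ | d (y n) a ♯ ω ^ ρ * μ ≤ d (z n) a} ∈ F :=
  exists_farther_galaxy_general X d F hF ρ a m hm y hy
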